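/- Let G be a graph with at least one edge, and let L_G denote the property of containing a copy of G. If p = p(n) satisfies p = o(n^{−1/ρ^max(G)}), then P(G(n,p) ⊨ L_G) → 0 as n → ∞; if n^{−1/ρ^max(G)} = o(p), then P(G(n,p) ⊨ L_G) → 1 as n → ∞. -/

import Mathlib

open Filter Topology FirstOrder

namespace RandomGraphSpectra

/-- The quantifier depth of a first-order (bounded) formula. -/
def qDepth {L : FirstOrder.Language} {α : Type*} :
    ∀ {n : ℕ}, L.BoundedFormula α n → ℕ
  | _, .falsum => 0
  | _, .equal _ _ => 0
  | _, .rel _ _ => 0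
  | _, .imp f g => max (qDepth f) (qDepth g)
  | _, .all f => qDepth f + 1

/-- A simple graph satisfies a first-order sentence in the language of graphs. -/
def GraphSat {V : Type*} (G : SimpleGraph V) (φ : FirstOrder.Language.graph.Sentence) : Prop :=
  @FirstOrder.Language.Sentence.Realize FirstOrder.Language.graph V G.structure φ

/-- The number of edges of a simple graph. -/
noncomputable def edgeCount {V : Type*} (G : SimpleGraph V) : ℕ := Nat.card G.edgeSet

/-- The probability that `G(n,p)` equals a fixed graph `G` on `{1,…,n}`. -/
noncomputable def weight (n : ℕ) (p : ℝ) (G : SimpleGraph (Fin n)) : ℝ :=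
  p ^ edgeCount G * (1 - p) ^ (n.choose 2 - edgeCount G)

open Classical in
/-- The probability that the Erdős–Rényi random graph `G(n,p)` satisfies a predicate `P`. -/
noncomputable def probPred (n : ℕ) (p : ℝ) (P : SimpleGraph (Fin n) → Prop) : ℝ :=
  ∑ᶠ G : SimpleGraph (Fin n), if P G then weight n p G else 0

/-- The probability that `G(n,p)` satisfies a first-order sentence. -/
noncomputable def probSat (n : ℕ) (p : ℝ) (φ : FirstOrder.Language.graph.Sentence) : ℝ :=
  probPred n p (fun G => GraphSat G φ)

open Classical in
/-- The probability that the pair of independent random graphs `G(n,p), G(m,q)`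
satisfies a predicate `P`. -/
noncomputable def probPred2 (n m : ℕ) (p q : ℝ)
    (P : SimpleGraph (Fin n) → SimpleGraph (Fin m) → Prop) : ℝ :=
  ∑ᶠ G : SimpleGraph (Fin n), ∑ᶠ H : SimpleGraph (Fin m),
    if P G H then weight n p G * weight m q H else 0

/-- The spectrum `S_k^1`: the set of `α ∈ (0,1)` such that for some first-order sentence `φ`
of quantifier depth at most `k`, with `p(n) = n^{-α}`, the probability that `G(n,p(n)) ⊨ φ`
does not tend to `0` and does not tend to `1`. -/
def S1 (k : ℕ) : Set ℝ :=
  {α | α ∈ Set.Ioo (0 : ℝ) 1 ∧ ∃ φ : FirstOrder.Language.graph.Sentence, qDepth φ ≤ k ∧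
    ¬(Tendsto (fun n : ℕ => probSat n ((n : ℝ) ^ (-α)) φ) atTop (nhds 0) ∨
      Tendsto (fun n : ℕ => probSat n ((n : ℝ) ^ (-α)) φ) atTop (nhds 1))}

/-- The spectrum `S_k^2`. -/
def S2 (k : ℕ) : Set ℝ :=
  {α | α ∈ Set.Ioo (0 : ℝ) 1 ∧ ∃ φ : FirstOrder.Language.graph.Sentence, qDepth φ ≤ k ∧
    ¬∃ δ : ℝ, (δ = 0 ∨ δ = 1) ∧ ∃ ε : ℝ, 0 < ε ∧ ∀ p : ℕ → ℝ,
      (∀ n : ℕ, 1 ≤ n → (n : ℝ) ^ (-α - ε) < p n ∧ p n < (n : ℝ) ^ (-α + ε)) →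
      Tendsto (fun n : ℕ => probSat n (p n) φ) atTop (nhds δ)}

/-- `G(n, p(n))` obeys the zero-one `k`-law. -/
def ZeroOneKLaw (k : ℕ) (p : ℕ → ℝ) : Prop :=
  ∀ φ : FirstOrder.Language.graph.Sentence, qDepth φ ≤ k →
    Tendsto (fun n : ℕ => probSat n (p n) φ) atTop (nhds 0) ∨
    Tendsto (fun n : ℕ => probSat n (p n) φ) atTop (nhds 1)

/-- The density `ρ(G) = e(G)/v(G)` of a graph. -/
noncomputable def density {V : Type*} (G : SimpleGraph V) : ℝ :=
  (Nat.card G.edgeSet : ℝ) / (Nat.card V : ℝ)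

/-- A graph is strictly balanced if every proper subgraph with at least one vertex has
strictly smaller density. -/
def StrictlyBalanced {V : Type*} (G : SimpleGraph V) : Prop :=
  ∀ H : G.Subgraph, H ≠ ⊤ → H.verts.Nonempty → density H.coe < density G

/-- `ρ^max(G)`: the maximum density of a subgraph of `G` with at least one vertex. -/
noncomputable def maxDensity {V : Type*} (G : SimpleGraph V) : ℝ :=
  sSup {x : ℝ | ∃ H : G.Subgraph, H.verts.Nonempty ∧ x = density H.coe}

/-- The relative density `ρ(K,H) = e(K,H)/v(K,H)` of a pair of nested subgraphs. -/
noncomputable def pairDensity {V : Type*} {G : SimpleGraph V} (K H : G.Subgraph) : ℝ :=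
  ((Nat.card K.edgeSet : ℝ) - (Nat.card H.edgeSet : ℝ)) /
    ((Nat.card K.verts : ℝ) - (Nat.card H.verts : ℝ))

/-- `ρ^max(G,H)` where the ambient graph `G` corresponds to the top subgraph. -/
noncomputable def maxPairDensity {V : Type*} {G : SimpleGraph V} (H : G.Subgraph) : ℝ :=
  sSup {x : ℝ | ∃ K : G.Subgraph, H < K ∧ x = pairDensity K H}

/-- `f_α(K,H) = v(K,H) - α·e(K,H)`. -/
noncomputable def fAlpha (α : ℝ) {V : Type*} {G : SimpleGraph V} (K H : G.Subgraph) : ℝ :=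
  ((Nat.card K.verts : ℝ) - (Nat.card H.verts : ℝ)) -
    α * ((Nat.card K.edgeSet : ℝ) - (Nat.card H.edgeSet : ℝ))

/-- The pair `(G,H)` is `α`-safe: `f_α(S,H) > 0` for every `S` with `H ⊂ S ⊆ G`. -/
def AlphaSafe (α : ℝ) {V : Type*} (G : SimpleGraph V) (H : G.Subgraph) : Prop :=
  ∀ S : G.Subgraph, H < S → 0 < fAlpha α S H

/-- The pair `(G,H)` is strictly balanced: `ρ(G,H) > ρ(K,H)` for every `H ⊂ K ⊂ G`. -/
def StrictlyBalancedPair {V : Type*} (G : SimpleGraph V) (H : G.Subgraph) : Prop :=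
  ∀ K : G.Subgraph, H < K → K ≠ ⊤ → pairDensity K H < pairDensity (⊤ : G.Subgraph) H

/-- The set `E(K) \ (E(H) ∪ E(K∖H))` is non-empty: `K` has an edge, not an edge of `H`,
with at least one endpoint in `V(H)`. -/
def TouchesRoots {V : Type*} {G : SimpleGraph V} (H K : G.Subgraph) : Prop :=
  ∃ u v : V, K.Adj u v ∧ ¬H.Adj u v ∧ (u ∈ H.verts ∨ v ∈ H.verts)

/-- `e^min(G,H)` (`G` being the top subgraph). -/
noncomputable def eMin {V : Type*} {G : SimpleGraph V} (H : G.Subgraph) : ℕ :=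
  sInf {e : ℕ | ∃ K : G.Subgraph, H < K ∧ TouchesRoots H K ∧
    pairDensity K H = maxPairDensity H ∧ e = Nat.card K.edgeSet - Nat.card H.edgeSet}

/-- `f` realizes a `(G,(r 0,…,r (m-1)))`-extension of the tuple `x` in `Γ`: an injective copy
of the vertex set of `G` sending the roots to `x` and containing all edges of `E(G)∖E(H)`
as edges outside the root-induced subgraph. -/
def IsExtension {W V : Type*} (Gp : SimpleGraph W) (H : Gp.Subgraph) {m : ℕ}
    (r : Fin m → W) (Γ : SimpleGraph V) (x : Fin m → V) (f : W → V) : Prop :=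
  Function.Injective f ∧ (∀ j : Fin m, f (r j) = x j) ∧
    ∀ u v : W, Gp.Adj u v → ¬H.Adj u v →
      Γ.Adj (f u) (f v) ∧ ¬(u ∈ H.verts ∧ v ∈ H.verts)

/-- Strict extension: the implication above is an equivalence. -/
def IsStrictExtension {W V : Type*} (Gp : SimpleGraph W) (H : Gp.Subgraph) {m : ℕ}
    (r : Fin m → W) (Γ : SimpleGraph V) (x : Fin m → V) (f : W → V) : Prop :=
  Function.Injective f ∧ (∀ j : Fin m, f (r j) = x j) ∧
    ∀ u v : W, (Gp.Adj u v ∧ ¬H.Adj u v) ↔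
      (Γ.Adj (f u) (f v) ∧ ¬(u ∈ H.verts ∧ v ∈ H.verts))

/-- The pair of subgraphs of `Γ` with vertex sets `B ⊆ A` is `(K,T)`-maximal in `Γ`
(where `T ⊂ K` has roots enumerated by `s`). -/
def PairMaximal {U V : Type*} (Kp : SimpleGraph U) (T : Kp.Subgraph) {t : ℕ}
    (s : Fin t → U) (Γ : SimpleGraph V) (A B : Set V) : Prop :=
  ∀ tup : Fin t → V, Function.Injective tup → (∀ i, tup i ∈ A) → (∃ i, tup i ∉ B) →
    ¬∃ f : U → V, IsStrictExtension Kp T s Γ tup f ∧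
      (∀ u : U, f u ∈ A → f u ∈ Set.range tup) ∧
      (∀ u : U, f u ∉ Set.range tup → ∀ a ∈ A, a ∉ Set.range tup → ¬Γ.Adj (f u) a)

/-- The subgraph of `Γ` with vertex set `A` is `(K,T)`-maximal in `Γ`. -/
def GraphMaximal {U V : Type*} (Kp : SimpleGraph U) (T : Kp.Subgraph) {t : ℕ}
    (s : Fin t → U) (Γ : SimpleGraph V) (A : Set V) : Prop :=
  ∀ tup : Fin t → V, Function.Injective tup → (∀ i, tup i ∈ A) →
    ¬∃ f : U → V, IsStrictExtension Kp T s Γ tup f ∧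
      (∀ u : U, f u ∈ A → f u ∈ Set.range tup) ∧
      (∀ u : U, f u ∉ Set.range tup → ∀ a ∈ A, a ∉ Set.range tup → ¬Γ.Adj (f u) a)

/-- `Γ` contains a copy of `Gp`. -/
def ContainsCopy {W V : Type*} (Gp : SimpleGraph W) (Γ : SimpleGraph V) : Prop :=
  ∃ f : W → V, Function.Injective f ∧ ∀ u v : W, Gp.Adj u v → Γ.Adj (f u) (f v)

/-- The number of copies of `Gp` in `Γ`: subgraphs of `Γ` isomorphic to `Gp`. -/
noncomputable def numCopies {W V : Type*} (Gp : SimpleGraph W) (Γ : SimpleGraph V) : ℕ :=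
  Nat.card {H : Γ.Subgraph // Nonempty (Gp ≃g H.coe)}

/-- The matched tuples of chosen vertices induce a partial isomorphism. -/
def PartialIso {V W : Type*} (G : SimpleGraph V) (H : SimpleGraph W)
    (xs : List V) (ys : List W) : Prop :=
  ∃ h : xs.length = ys.length,
    ∀ j k : Fin xs.length,
      (xs.get j = xs.get k ↔ ys.get (Fin.cast h j) = ys.get (Fin.cast h k)) ∧
      (G.Adj (xs.get j) (xs.get k) ↔ H.Adj (ys.get (Fin.cast h j)) (ys.get (Fin.cast h k)))

/-- Duplicator has a winning strategy in the remaining `i` rounds of the Ehrenfeucht game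
on `(G,H)` from the position given by the already chosen vertices `xs`, `ys`. -/
def DuplicatorWinsFrom {V W : Type*} (G : SimpleGraph V) (H : SimpleGraph W) :
    ℕ → List V → List W → Prop
  | 0, xs, ys => PartialIso G H xs ys
  | (i + 1), xs, ys =>
      (∀ x : V, ∃ y : W, DuplicatorWinsFrom G H i (x :: xs) (y :: ys)) ∧
      (∀ y : W, ∃ x : V, DuplicatorWinsFrom G H i (x :: xs) (y :: ys))

/-- Duplicator has a winning strategy in the Ehrenfeucht game `EHR(G,H,i)`. -/
def DuplicatorWins {V W : Type*} (G : SimpleGraph V) (H : SimpleGraph W) (i : ℕ) : Prop :=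
  DuplicatorWinsFrom G H i [] []

end RandomGraphSpectra

namespace RandomGraphSpectra

/-- The class `𝒮` of graphs from Section "Properties which imply the existence of
Duplicator's winning strategy" (properties 1)–3)). -/
def GoodGraph (k b : ℕ) (α : ℝ) {V : Type*} (Γ : SimpleGraph V) : Prop :=
  -- 1) no strictly balanced subgraph with at most `2^{2k}·b` vertices and density `> 1/α`
  (∀ A : Γ.Subgraph, Nat.card A.verts ≤ 2 ^ (2 * k) * b → StrictlyBalanced A.coe →
      density A.coe ≤ 1 / α) ∧
  -- 2) strict extensions of α-safe pairs which are `(K₁,K₂)`-maximal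
  (∀ (l h : ℕ) (H₁ : SimpleGraph (Fin l)) (H₂ : H₁.Subgraph) (r : Fin h → Fin l),
      Function.Injective r → Set.range r = H₂.verts →
      l ≤ 2 ^ (2 * k) * b + k * 2 ^ k → AlphaSafe α H₁ H₂ →
      ∀ x : Fin h → V, Function.Injective x →
        ∃ f : Fin l → V, IsStrictExtension H₁ H₂ r Γ x f ∧
          ∀ (u t : ℕ) (K₁ : SimpleGraph (Fin u)) (K₂ : K₁.Subgraph) (s : Fin t → Fin u),
            Function.Injective s → Set.range s = K₂.verts →
            u ≤ 2 ^ k → Nat.card K₂.verts ≤ 2 → fAlpha α (⊤ : K₁.Subgraph) K₂ < 0 →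
            PairMaximal K₁ K₂ s Γ (Set.range f) (Set.range x)) ∧
  -- 3) maximal copies of sparse strictly balanced graphs
  (∀ (w : ℕ) (Hp : SimpleGraph (Fin w)), w ≤ 2 ^ (2 * k) * b → StrictlyBalanced Hp →
      density Hp < 1 / α →
      ∃ f : Fin w → V, Function.Injective f ∧
        (∀ u v : Fin w, Hp.Adj u v → Γ.Adj (f u) (f v)) ∧
        ∀ (u t : ℕ) (K₁ : SimpleGraph (Fin u)) (K₂ : K₁.Subgraph) (s : Fin t → Fin u),
          Function.Injective s → Set.range s = K₂.verts →
          u ≤ 2 ^ k → Nat.card K₂.verts ≤ 2 → fAlpha α (⊤ : K₁.Subgraph) K₂ < 0 →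
          GraphMaximal K₁ K₂ s Γ (Set.range f))

end RandomGraphSpectra

/-!
The 0-statement is the first moment method applied to a densest subgraph: if `H ⊆ G` has
`e(H) = ρ v(H)` with `ρ = ρ^max(G)`, then
`P(G ⊆ G(n,p)) ≤ P(H ⊆ G(n,p)) ≤ n^{v(H)} p^{e(H)} = (p n^{1/ρ})^{e(H)} → 0`.

The 1-statement is the second moment method for the number `X` of embeddings of `G` into
`G(n,p)`. Two embeddings whose images share `c > 0` edges and `s` vertices span `2e(G) - c`
edges, and the shared edges form a copy of a subgraph of `G` on at most `s` vertices, so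
`c ≤ ρ s`. For `p ≥ C n^{-1/ρ}` this gives `p^{-c} ≤ n^s / C`; summing over pairs,
`E[X²] ≤ (1 + K/C) E[X]²` with `K` depending only on `v(G)`, hence
`P(X > 0) ≥ E[X]² / E[X²] ≥ 1 - K/C`.
-/

section Combinatorics

open Finset

theorem Finset.sum_powerset_ite_subset {α R : Type*} [DecidableEq α] [CommSemiring R]
    {E M : Finset α} (hEM : E ⊆ M) (a b : R) :
    ∑ S ∈ M.powerset, (if E ⊆ S then a ^ #S * b ^ (#M - #S) else 0) =
      a ^ #E * (a + b) ^ (#M - #E) := by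
  -- expand `∏ i ∈ M, (a + [i ∉ E] b)` over the subsets of `M`
  have key := Finset.prod_add (fun _ => a) (fun i => if i ∈ E then 0 else b) M
  have hlhs : ∏ i ∈ M, (a + if i ∈ E then 0 else b) = a ^ #E * (a + b) ^ (#M - #E) := by
    simp only [apply_ite (a + ·), add_zero, prod_ite, prod_const, filter_mem_eq_inter,
      inter_eq_right.2 hEM, filter_not, card_sdiff_of_subset hEM]
  rw [← hlhs, key]
  refine sum_congr rfl fun S hS => ?_
  have hSM := mem_powerset.1 hS
  have hsub : (∀ i ∈ M \ S, i ∉ E) ↔ E ⊆ S := by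
    constructor
    · intro h i hi
      by_contra hiS
      exact h i (mem_sdiff.2 ⟨hEM hi, hiS⟩) hi
    · intro h i hi hiE
      exact (mem_sdiff.1 hi).2 (h hiE)
  have hprod : ∏ i ∈ M \ S, (if i ∈ E then 0 else b) =
      if E ⊆ S then b ^ (#M - #S) else 0 := by
    simp_rw [← ite_not (_ ∈ E)]
    rw [prod_ite_zero, prod_const, card_sdiff_of_subset hSM, if_congr hsub rfl rfl]
  rw [prod_const, hprod, mul_ite, mul_zero]

open SimpleGraph in
open scoped Classical in
theorem SimpleGraph.sum_edgeFinset_eq_sum_powerset {V M : Type*} [Fintype V] [DecidableEq V]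
    [AddCommMonoid M] (F : Finset (Sym2 V) → M) :
    ∑ G : SimpleGraph V, F G.edgeFinset =
      ∑ S ∈ (⊤ : SimpleGraph V).edgeFinset.powerset, F S := by
  refine sum_nbij' (fun G => G.edgeFinset) (fun S => SimpleGraph.fromEdgeSet S)
    (fun G _ => mem_powerset.2 (SimpleGraph.edgeFinset_mono le_top)) (fun _ _ => mem_univ _)
    (fun G _ => by simp) (fun S hS => ?_) (fun _ _ => rfl)
  rw [mem_powerset] at hS
  rw [← coe_inj, coe_edgeFinset, edgeSet_fromEdgeSet, sdiff_eq_left, Set.disjoint_left]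
  intro e he
  simpa using hS he

theorem Function.Embedding.sum_pow_card_filter_mem_le {W V : Type*} [Fintype W] [DecidableEq W]
    [Fintype V] [DecidableEq V] (A : Finset V) {x : ℝ} (hx : 0 ≤ x) :
    ∑ g : W ↪ V, x ^ #{w | g w ∈ A} ≤ (#A * x + Fintype.card V) ^ Fintype.card W := by
  have hterm (g : W → V) : x ^ #{w | g w ∈ A} = ∏ w, if g w ∈ A then x else 1 := by
    rw [prod_ite, prod_const, prod_const_one, mul_one]
  calc ∑ g : W ↪ V, x ^ #{w | g w ∈ A}
      = ∑ g ∈ univ.map ⟨_, Function.Embedding.coe_injective⟩, x ^ #{w | g w ∈ A} := by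
        rw [sum_map]; rfl
    _ ≤ ∑ g : W → V, x ^ #{w | g w ∈ A} :=
        sum_le_univ_sum_of_nonneg fun _ => pow_nonneg hx _
    _ = ∑ g : W → V, ∏ w, if g w ∈ A then x else 1 := sum_congr rfl fun g _ => hterm g
    _ = (∑ v, if v ∈ A then x else 1) ^ Fintype.card W := by
        rw [← Fintype.prod_sum fun _ v => if v ∈ A then x else 1, prod_const, card_univ]
    _ ≤ (#A * x + Fintype.card V) ^ Fintype.card W := by
        gcongr
        calc ∑ v, (if v ∈ A then x else 1)
            ≤ ∑ v, ((if v ∈ A then x else 0) + 1) :=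
              sum_le_sum fun v _ => by split_ifs <;> linarith
          _ = #A * x + Fintype.card V := by
              simp [sum_add_distrib, sum_ite_mem]

end Combinatorics

theorem Nat.pow_le_two_pow_mul_descFactorial {n k : ℕ} (h : 2 * k ≤ n + 2) :
    n ^ k ≤ 2 ^ k * n.descFactorial k :=
  calc n ^ k ≤ (2 * (n + 1 - k)) ^ k := Nat.pow_le_pow_left (by omega) k
    _ = 2 ^ k * (n + 1 - k) ^ k := mul_pow _ _ _
    _ ≤ 2 ^ k * n.descFactorial k := Nat.mul_le_mul_left _ (Nat.pow_sub_le_descFactorial n k)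

theorem Real.le_pow_mul_pow_of_mul_rpow_le {x C q ρ : ℝ} {c s : ℕ} (hx : 1 ≤ x) (hC : 1 ≤ C)
    (hρ : 0 < ρ) (hq : C * x ^ (-(1 / ρ)) ≤ q) (hc : c ≠ 0) (hcs : c ≤ ρ * s) :
    C ≤ q ^ c * x ^ s := by
  have hx0 : 0 < x := zero_lt_one.trans_le hx
  have hxs : 1 ≤ (x ^ (-(1 / ρ))) ^ c * x ^ s := by
    rw [← Real.rpow_natCast (x ^ _), ← Real.rpow_mul hx0.le, ← Real.rpow_natCast x s,
      ← Real.rpow_add hx0]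
    refine Real.one_le_rpow hx ?_
    have : (c : ℝ) / ρ ≤ s := (div_le_iff₀' hρ).2 hcs
    linarith [show -(1 / ρ) * c = -(c / ρ) by ring]
  calc C ≤ C ^ c := le_self_pow₀ hC hc
    _ ≤ C ^ c * ((x ^ (-(1 / ρ))) ^ c * x ^ s) := le_mul_of_one_le_right (by positivity) hxs
    _ = (C * x ^ (-(1 / ρ))) ^ c * x ^ s := by ring
    _ ≤ q ^ c * x ^ s := by gcongr

namespace RandomGraphSpectra

open Finset SimpleGraph Asymptotics
open scoped Classical

section Expectation

variable {n : ℕ} {p : ℝ}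

noncomputable def expectation (n : ℕ) (p : ℝ) (X : SimpleGraph (Fin n) → ℝ) : ℝ :=
  ∑ Γ, weight n p Γ * X Γ

lemma probPred_eq_expectation (P : SimpleGraph (Fin n) → Prop) :
    probPred n p P = expectation n p (fun Γ => if P Γ then 1 else 0) := by
  simp only [probPred, finsum_eq_sum_of_fintype, expectation, mul_ite, mul_one, mul_zero]

lemma weight_eq_pow_card_edgeFinset (Γ : SimpleGraph (Fin n)) :
    weight n p Γ =
      p ^ #Γ.edgeFinset * (1 - p) ^ (#(⊤ : SimpleGraph (Fin n)).edgeFinset - #Γ.edgeFinset) := by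
  rw [weight, edgeCount, Nat.card_eq_fintype_card, ← edgeFinset_card,
    card_edgeFinset_top_eq_card_choose_two, Fintype.card_fin]

lemma weight_nonneg (hp0 : 0 ≤ p) (hp1 : p ≤ 1) (Γ : SimpleGraph (Fin n)) :
    0 ≤ weight n p Γ :=
  mul_nonneg (pow_nonneg hp0 _) (pow_nonneg (sub_nonneg.2 hp1) _)

lemma expectation_mono (hp0 : 0 ≤ p) (hp1 : p ≤ 1) {X Y : SimpleGraph (Fin n) → ℝ}
    (h : ∀ Γ, X Γ ≤ Y Γ) : expectation n p X ≤ expectation n p Y :=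
  sum_le_sum fun Γ _ => mul_le_mul_of_nonneg_left (h Γ) (weight_nonneg hp0 hp1 Γ)

lemma expectation_sum {ι : Type*} (s : Finset ι) (X : ι → SimpleGraph (Fin n) → ℝ) :
    expectation n p (fun Γ => ∑ i ∈ s, X i Γ) = ∑ i ∈ s, expectation n p (X i) := by
  simp only [expectation, mul_sum]
  exact sum_comm

lemma probPred_le_eq_pow (H : SimpleGraph (Fin n)) :
    probPred n p (H ≤ ·) = p ^ #H.edgeFinset := by
  have hH : H.edgeFinset ⊆ (⊤ : SimpleGraph (Fin n)).edgeFinset := edgeFinset_mono le_top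
  simp only [probPred, finsum_eq_sum_of_fintype, weight_eq_pow_card_edgeFinset,
    ← edgeFinset_subset_edgeFinset]
  rw [sum_edgeFinset_eq_sum_powerset (fun S => if H.edgeFinset ⊆ S then
      p ^ #S * (1 - p) ^ (#(⊤ : SimpleGraph (Fin n)).edgeFinset - #S) else 0),
    sum_powerset_ite_subset hH, add_sub_cancel, one_pow, mul_one]

lemma probPred_mono (hp0 : 0 ≤ p) (hp1 : p ≤ 1) {P Q : SimpleGraph (Fin n) → Prop}
    (h : ∀ Γ, P Γ → Q Γ) : probPred n p P ≤ probPred n p Q := by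
  simp only [probPred_eq_expectation]
  refine expectation_mono hp0 hp1 fun Γ => ?_
  split_ifs with hP hQ
  · exact le_rfl
  · exact absurd (h Γ hP) hQ
  · exact zero_le_one
  · exact le_rfl

lemma probPred_nonneg (hp0 : 0 ≤ p) (hp1 : p ≤ 1) (P : SimpleGraph (Fin n) → Prop) :
    0 ≤ probPred n p P := by
  rw [probPred_eq_expectation]
  exact sum_nonneg fun Γ _ =>
    mul_nonneg (weight_nonneg hp0 hp1 Γ) (ite_nonneg zero_le_one le_rfl)

lemma probPred_le_one (hp0 : 0 ≤ p) (hp1 : p ≤ 1) (P : SimpleGraph (Fin n) → Prop) :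
    probPred n p P ≤ 1 := by
  have hbot : probPred n p (⊥ ≤ ·) = 1 := by
    rw [probPred_le_eq_pow]
    simp [edgeFinset]
  exact hbot ▸ probPred_mono hp0 hp1 fun Γ _ => bot_le

lemma probPred_exists_le_sum (hp0 : 0 ≤ p) (hp1 : p ≤ 1) {ι : Type*} (s : Finset ι)
    (P : ι → SimpleGraph (Fin n) → Prop) :
    probPred n p (fun Γ => ∃ i ∈ s, P i Γ) ≤ ∑ i ∈ s, probPred n p (P i) := by
  simp only [probPred_eq_expectation, ← expectation_sum]
  refine expectation_mono hp0 hp1 fun Γ => ?_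
  split_ifs with h
  · obtain ⟨i, hi, hP⟩ := h
    calc (1 : ℝ) = if P i Γ then 1 else 0 := by rw [if_pos hP]
      _ ≤ ∑ j ∈ s, if P j Γ then 1 else 0 :=
        single_le_sum (f := fun j => if P j Γ then (1 : ℝ) else 0)
          (fun j _ => by split_ifs <;> norm_num) hi
  · exact sum_nonneg fun j _ => by split_ifs <;> norm_num

lemma sq_expectation_le (hp0 : 0 ≤ p) (hp1 : p ≤ 1) (X : SimpleGraph (Fin n) → ℝ) :
    expectation n p X ^ 2 ≤ probPred n p (X · ≠ 0) * expectation n p (fun Γ => X Γ ^ 2) := by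
  rw [probPred_eq_expectation]
  refine sum_sq_le_sum_mul_sum_of_sq_le_mul _ (fun Γ _ => ?_) (fun Γ _ => ?_) fun Γ _ => ?_
  · exact mul_nonneg (weight_nonneg hp0 hp1 Γ) (by positivity)
  · exact mul_nonneg (weight_nonneg hp0 hp1 Γ) (sq_nonneg _)
  · dsimp only
    split_ifs with hX
    · exact le_of_eq (by ring)
    · simp [not_not.1 hX]

theorem one_sub_le_probPred_ne_zero (hp0 : 0 ≤ p) (hp1 : p ≤ 1) {X : SimpleGraph (Fin n) → ℝ}
    {δ : ℝ} (hδ : 0 ≤ δ) (hX : 0 < expectation n p X)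
    (hX2 : expectation n p (fun Γ => X Γ ^ 2) ≤ (1 + δ) * expectation n p X ^ 2) :
    1 - δ ≤ probPred n p (X · ≠ 0) := by
  have hcs := sq_expectation_le hp0 hp1 X
  have hP := probPred_nonneg hp0 hp1 (X · ≠ 0)
  have hμ : 0 < expectation n p X ^ 2 := by positivity
  have h1 : 1 ≤ probPred n p (X · ≠ 0) * (1 + δ) := by
    refine le_of_mul_le_mul_right ?_ hμ
    calc 1 * expectation n p X ^ 2
        ≤ probPred n p (X · ≠ 0) * expectation n p (fun Γ => X Γ ^ 2) := by rwa [one_mul]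
      _ ≤ probPred n p (X · ≠ 0) * ((1 + δ) * expectation n p X ^ 2) := by gcongr
      _ = probPred n p (X · ≠ 0) * (1 + δ) * expectation n p X ^ 2 := by ring
  nlinarith

end Expectation

section Copies

variable {U V : Type*}

lemma containsCopy_iff_exists_map_le (F : SimpleGraph U) (Γ : SimpleGraph V) :
    ContainsCopy F Γ ↔ ∃ f : U ↪ V, F.map f ≤ Γ := by
  simp only [ContainsCopy, SimpleGraph.map_le_iff_le_comap]
  exact ⟨fun ⟨f, hf, h⟩ => ⟨⟨f, hf⟩, fun _ _ huv => h _ _ huv⟩,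
    fun ⟨f, h⟩ => ⟨f, f.injective, fun _ _ huv => h huv⟩⟩

lemma ContainsCopy.coe_subgraph {F : SimpleGraph U} {Γ : SimpleGraph V} (h : ContainsCopy F Γ)
    (H : F.Subgraph) : ContainsCopy H.coe Γ := by
  obtain ⟨f, hf, hadj⟩ := h
  exact ⟨f ∘ Subtype.val, hf.comp Subtype.val_injective, fun _ _ huv => hadj _ _ (H.adj_sub huv)⟩

lemma probPred_map_le_eq_pow [Fintype U] {n : ℕ} {p : ℝ} (F : SimpleGraph U) (f : U ↪ Fin n) :
    probPred n p (F.map f ≤ ·) = p ^ #F.edgeFinset := by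
  rw [probPred_le_eq_pow]
  congr 1
  convert card_edgeFinset_map f F

lemma probPred_containsCopy_le [Fintype U] {n : ℕ} {p : ℝ} (hp0 : 0 ≤ p) (hp1 : p ≤ 1)
    (F : SimpleGraph U) :
    probPred n p (ContainsCopy F) ≤ (n : ℝ) ^ Nat.card U * p ^ Nat.card F.edgeSet := by
  rw [Nat.card_eq_fintype_card, Nat.card_eq_fintype_card, ← edgeFinset_card]
  calc probPred n p (ContainsCopy F)
      ≤ probPred n p (fun Γ => ∃ f ∈ (univ : Finset (U ↪ Fin n)), F.map f ≤ Γ) :=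
        probPred_mono hp0 hp1 fun Γ h => by simpa using (containsCopy_iff_exists_map_le F Γ).1 h
    _ ≤ ∑ f : U ↪ Fin n, probPred n p (F.map f ≤ ·) := probPred_exists_le_sum hp0 hp1 _ _
    _ = (n.descFactorial (Fintype.card U) : ℝ) * p ^ #F.edgeFinset := by
        simp [probPred_map_le_eq_pow, Fintype.card_embedding_eq]
    _ ≤ (n : ℝ) ^ Fintype.card U * p ^ #F.edgeFinset := by
        gcongr
        exact_mod_cast Nat.descFactorial_le_pow n _

end Copies

section Density

variable {W : Type*} (Gp : SimpleGraph W)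

lemma natCard_edgeSet_coe (H : Gp.Subgraph) : Nat.card H.coe.edgeSet = Nat.card H.edgeSet := by
  rw [Nat.card_coe_set_eq, Nat.card_coe_set_eq, ← H.image_coe_edgeSet_coe,
    Set.ncard_image_of_injective _ (Sym2.map.injective Subtype.val_injective)]

variable [Finite W]

lemma finite_densities :
    {x : ℝ | ∃ H : Gp.Subgraph, H.verts.Nonempty ∧ x = density H.coe}.Finite :=
  (Set.finite_range fun H : Gp.Subgraph => density H.coe).subset <| by
    rintro _ ⟨H, -, rfl⟩
    exact ⟨H, rfl⟩

lemma density_le_maxDensity {H : Gp.Subgraph} (hH : H.verts.Nonempty) :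
    density H.coe ≤ maxDensity Gp :=
  le_csSup (finite_densities Gp).bddAbove ⟨H, hH, rfl⟩

lemma natCard_edgeSet_le_maxDensity_mul (H : Gp.Subgraph) :
    (Nat.card H.edgeSet : ℝ) ≤ maxDensity Gp * Nat.card H.verts := by
  rcases H.verts.eq_empty_or_nonempty with hV | hV
  · have hedges : H.edgeSet = ∅ := Set.eq_empty_of_forall_notMem fun e he => by
      induction e with
      | _ u v => exact (hV ▸ H.edge_vert he : u ∈ (∅ : Set W))
    simp [hedges, hV]
  · have hpos : (0 : ℝ) < Nat.card H.verts := by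
      have := hV.to_subtype
      exact_mod_cast Nat.card_pos
    have h := density_le_maxDensity Gp hV
    rwa [density, natCard_edgeSet_coe, div_le_iff₀ hpos] at h

lemma maxDensity_pos (hE : Gp.edgeSet.Nonempty) : 0 < maxDensity Gp := by
  have hcard : (0 : ℝ) < Nat.card (⊤ : Gp.Subgraph).edgeSet := by
    rw [Subgraph.edgeSet_top]
    have := hE.to_subtype
    exact_mod_cast Nat.card_pos
  have h := natCard_edgeSet_le_maxDensity_mul Gp ⊤
  by_contra! hρ
  nlinarith [(Nat.cast_nonneg (Nat.card (⊤ : Gp.Subgraph).verts) : (0 : ℝ) ≤ _)]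

lemma exists_natCard_edgeSet_eq_maxDensity_mul [Nonempty W] :
    ∃ H : Gp.Subgraph, H.verts.Nonempty ∧
      (Nat.card H.edgeSet : ℝ) = maxDensity Gp * Nat.card H.verts := by
  have hne : {x : ℝ | ∃ H : Gp.Subgraph, H.verts.Nonempty ∧ x = density H.coe}.Nonempty :=
    ⟨_, ⊤, by simp, rfl⟩
  obtain ⟨H, hH, hρ⟩ := hne.csSup_mem (finite_densities Gp)
  have hpos : (0 : ℝ) < Nat.card H.verts := by
    have := hH.to_subtype
    exact_mod_cast Nat.card_pos
  refine ⟨H, hH, ?_⟩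
  rw [maxDensity, hρ, density, natCard_edgeSet_coe, div_mul_cancel₀ _ hpos.ne']

end Density

section ZeroStatement

variable {W : Type*} [Fintype W] (Gp : SimpleGraph W)

theorem tendsto_probPred_containsCopy_zero (hE : Gp.edgeSet.Nonempty) (p : ℕ → ℝ)
    (hp : ∀ n, 0 ≤ p n ∧ p n ≤ 1)
    (h : p =o[atTop] fun n : ℕ => (n : ℝ) ^ (-(1 / maxDensity Gp))) :
    Tendsto (fun n => probPred n (p n) (ContainsCopy Gp)) atTop (𝓝 0) := by
  have : Nonempty W := by
    obtain ⟨⟨u, -⟩, -⟩ := hE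
    exact ⟨u⟩
  obtain ⟨H, hH, hdense⟩ := exists_natCard_edgeSet_eq_maxDensity_mul Gp
  set ρ := maxDensity Gp
  have hρ : 0 < ρ := maxDensity_pos Gp hE
  set v := Nat.card H.verts
  set e := Nat.card H.edgeSet
  have he : e ≠ 0 := by
    have : (0 : ℝ) < v := by
      have := hH.to_subtype
      exact_mod_cast Nat.card_pos
    intro he0
    rw [he0, Nat.cast_zero] at hdense
    nlinarith
  have hexp : 1 / ρ * e = v := by
    rw [hdense]
    field_simp
  have hbound : ∀ n : ℕ, probPred n (p n) (ContainsCopy Gp) ≤ (p n * (n : ℝ) ^ (1 / ρ)) ^ e := by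
    intro n
    have hcopy := probPred_containsCopy_le (n := n) (hp n).1 (hp n).2 H.coe
    rw [natCard_edgeSet_coe] at hcopy
    calc probPred n (p n) (ContainsCopy Gp)
        ≤ probPred n (p n) (ContainsCopy H.coe) :=
          probPred_mono (hp n).1 (hp n).2 fun Γ hΓ => hΓ.coe_subgraph H
      _ ≤ (n : ℝ) ^ v * p n ^ e := hcopy
      _ = (p n * (n : ℝ) ^ (1 / ρ)) ^ e := by
          rw [mul_pow, ← Real.rpow_natCast ((n : ℝ) ^ (1 / ρ)), ← Real.rpow_mul n.cast_nonneg,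
            hexp, Real.rpow_natCast, mul_comm]
  have hlim : Tendsto (fun n : ℕ => p n * (n : ℝ) ^ (1 / ρ)) atTop (𝓝 0) := by
    refine h.tendsto_div_nhds_zero.congr fun n => ?_
    rw [Real.rpow_neg n.cast_nonneg, div_inv_eq_mul]
  have hlim_pow := hlim.pow e
  rw [zero_pow he] at hlim_pow
  exact squeeze_zero (fun n => probPred_nonneg (hp n).1 (hp n).2 _) hbound hlim_pow

end ZeroStatement

section OneStatement

variable {W : Type*} [Fintype W] (Gp : SimpleGraph W) {n : ℕ} {p : ℝ}

lemma card_edgeFinset_le_maxDensity_mul {V : Type*} [Fintype V] (g : W ↪ V)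
    {H : SimpleGraph V} (hH : H ≤ Gp.map g) {A : Finset V} (hA : ∀ x y, H.Adj x y → x ∈ A) :
    (#H.edgeFinset : ℝ) ≤ maxDensity Gp * #{w | g w ∈ A} := by
  let S : Gp.Subgraph :=
    { verts := g ⁻¹' A
      Adj := fun u v => H.Adj (g u) (g v)
      adj_sub := fun h => by simpa using hH h
      edge_vert := fun h => hA _ _ h
      symm := ⟨fun _ _ h => h.symm⟩ }
  have hedges : Nat.card S.edgeSet = #H.edgeFinset := by
    have hrange : H.edgeSet ⊆ Set.range (Sym2.map g) := by
      refine (edgeSet_mono hH).trans ?_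
      rw [edgeSet_map]
      exact Set.image_subset_range _ _
    have hpre : S.edgeSet = Sym2.map g ⁻¹' H.edgeSet := by
      ext e
      induction e with
      | _ u v => rfl
    rw [Nat.card_coe_set_eq, hpre,
      Set.ncard_preimage_of_injective_subset_range (Sym2.map.injective g.injective) hrange,
      ← coe_edgeFinset, Set.ncard_coe_finset]
  have hverts : Nat.card S.verts = #{w | g w ∈ A} := by
    rw [Nat.card_coe_set_eq, Set.ncard_eq_toFinset_card']
    congr 1
    ext w
    simp [S]
  have h := natCard_edgeSet_le_maxDensity_mul Gp S
  rwa [hedges, hverts] at h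

noncomputable def embeddingCount (Γ : SimpleGraph (Fin n)) : ℝ :=
  ∑ f : W ↪ Fin n, if Gp.map f ≤ Γ then 1 else 0

lemma containsCopy_of_embeddingCount_ne_zero {Γ : SimpleGraph (Fin n)}
    (h : embeddingCount Gp Γ ≠ 0) : ContainsCopy Gp Γ := by
  rw [containsCopy_iff_exists_map_le]
  by_contra! hno
  exact h (sum_eq_zero fun f _ => if_neg (hno f))

lemma expectation_embeddingCount :
    expectation n p (embeddingCount Gp) =
      n.descFactorial (Fintype.card W) * p ^ #Gp.edgeFinset := by
  unfold embeddingCount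
  simp only [expectation_sum, ← probPred_eq_expectation, probPred_map_le_eq_pow]
  simp [Fintype.card_embedding_eq]

lemma expectation_embeddingCount_sq :
    expectation n p (fun Γ => embeddingCount Gp Γ ^ 2) =
      ∑ f : W ↪ Fin n, ∑ g : W ↪ Fin n, p ^ #(Gp.map f ⊔ Gp.map g).edgeFinset := by
  have hsq (Γ : SimpleGraph (Fin n)) : embeddingCount Gp Γ ^ 2 =
      ∑ f : W ↪ Fin n, ∑ g : W ↪ Fin n, if Gp.map f ⊔ Gp.map g ≤ Γ then 1 else 0 := by
    simp only [embeddingCount, sq, sum_mul_sum, ite_zero_mul_ite_zero, mul_one, sup_le_iff]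
  simp only [hsq, expectation_sum, ← probPred_eq_expectation, probPred_le_eq_pow]
  congr!

lemma pow_card_edgeFinset_map_sup_le (hE : Gp.edgeSet.Nonempty) {C : ℝ} (hC : 1 ≤ C)
    (hn : 1 ≤ n) (hp : C * (n : ℝ) ^ (-(1 / maxDensity Gp)) ≤ p) (f g : W ↪ Fin n) :
    p ^ #(Gp.map f ⊔ Gp.map g).edgeFinset ≤
      p ^ (2 * #Gp.edgeFinset) * (1 + C⁻¹ * (n : ℝ) ^ #{w | g w ∈ univ.map f}) := by
  have hsum : #(Gp.map f ⊔ Gp.map g).edgeFinset + #(Gp.map f ⊓ Gp.map g).edgeFinset =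
      2 * #Gp.edgeFinset := by
    have hf : #(Gp.map f).edgeFinset = #Gp.edgeFinset := by convert card_edgeFinset_map f Gp
    have hg : #(Gp.map g).edgeFinset = #Gp.edgeFinset := by convert card_edgeFinset_map g Gp
    have hui := card_union_add_card_inter (Gp.map f).edgeFinset (Gp.map g).edgeFinset
    rw [hf, hg, ← two_mul] at hui
    rw [← hui, edgeFinset_sup, edgeFinset_inf]
  set c := #(Gp.map f ⊓ Gp.map g).edgeFinset
  set s := #{w | g w ∈ univ.map f}
  have hp0 : 0 < p := (mul_pos (by positivity) (by positivity)).trans_le hp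
  rcases Nat.eq_zero_or_pos c with hc | hc
  · rw [hc, add_zero] at hsum
    rw [hsum]
    exact le_mul_of_one_le_right (by positivity) (le_add_of_nonneg_right (by positivity))
  have hshared : (c : ℝ) ≤ maxDensity Gp * s := by
    have hA : ∀ x y, (Gp.map f ⊓ Gp.map g).Adj x y → x ∈ univ.map f := fun x y hxy => by
      obtain ⟨u, v, -, rfl, -⟩ := (map_adj _ _ _ _).1 hxy.1
      exact mem_map_of_mem _ (mem_univ u)
    -- the shared edges form a copy of a subgraph of `Gp` on the `s` shared vertices
    convert card_edgeFinset_le_maxDensity_mul Gp g inf_le_right hA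
  have key : C ≤ p ^ c * (n : ℝ) ^ s :=
    Real.le_pow_mul_pow_of_mul_rpow_le (by exact_mod_cast hn) hC (maxDensity_pos Gp hE) hp
      hc.ne' hshared
  calc p ^ #(Gp.map f ⊔ Gp.map g).edgeFinset
      ≤ p ^ #(Gp.map f ⊔ Gp.map g).edgeFinset * (C⁻¹ * (p ^ c * (n : ℝ) ^ s)) :=
        le_mul_of_one_le_right (by positivity) ((one_le_inv_mul₀ (by positivity)).2 key)
    _ = p ^ (2 * #Gp.edgeFinset) * (C⁻¹ * (n : ℝ) ^ s) := by rw [← hsum, pow_add]; ring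
    _ ≤ p ^ (2 * #Gp.edgeFinset) * (1 + C⁻¹ * (n : ℝ) ^ s) := by gcongr; linarith

lemma sum_pow_card_filter_mem_map_le (f : W ↪ Fin n) (hn : 2 * Fintype.card W ≤ n) :
    ∑ g : W ↪ Fin n, (n : ℝ) ^ #{w | g w ∈ univ.map f} ≤
      (2 * (Fintype.card W + 1)) ^ Fintype.card W * n.descFactorial (Fintype.card W) := by
  have hpow := Nat.mul_le_mul_left ((Fintype.card W + 1) ^ Fintype.card W)
    (Nat.pow_le_two_pow_mul_descFactorial (n := n) (k := Fintype.card W) (by omega))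
  rw [← mul_pow, ← mul_assoc, ← mul_pow, mul_comm (Fintype.card W + 1) 2] at hpow
  refine (Function.Embedding.sum_pow_card_filter_mem_le _ n.cast_nonneg).trans ?_
  rw [card_map, card_univ, Fintype.card_fin, ← add_one_mul]
  exact_mod_cast hpow

theorem one_sub_le_probPred_containsCopy (hE : Gp.edgeSet.Nonempty) {C : ℝ} (hC : 1 ≤ C)
    (hn : 2 * Fintype.card W ≤ n) (hp : C * (n : ℝ) ^ (-(1 / maxDensity Gp)) ≤ p)
    (hp1 : p ≤ 1) :
    1 - (2 * (Fintype.card W + 1)) ^ Fintype.card W / C ≤ probPred n p (ContainsCopy Gp) := by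
  set v := Fintype.card W
  set e := #Gp.edgeFinset
  set I := n.descFactorial v
  set K : ℝ := (2 * (v + 1)) ^ v
  have hv : 1 ≤ v := by
    obtain ⟨⟨u, -⟩, -⟩ := hE
    exact Fintype.card_pos_iff.2 ⟨u⟩
  have hn1 : 1 ≤ n := by omega
  have hp0 : 0 < p := (mul_pos (by positivity) (by positivity)).trans_le hp
  have hI : (0 : ℝ) < I := by exact_mod_cast Nat.descFactorial_pos.2 (by omega)
  have hinner (f : W ↪ Fin n) :
      ∑ g : W ↪ Fin n, p ^ #(Gp.map f ⊔ Gp.map g).edgeFinset ≤ p ^ (2 * e) * I * (1 + K / C) :=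
    calc ∑ g : W ↪ Fin n, p ^ #(Gp.map f ⊔ Gp.map g).edgeFinset
        ≤ ∑ g : W ↪ Fin n, p ^ (2 * e) * (1 + C⁻¹ * (n : ℝ) ^ #{w | g w ∈ univ.map f}) :=
          sum_le_sum fun g _ => pow_card_edgeFinset_map_sup_le Gp hE hC hn1 hp f g
      _ = p ^ (2 * e) * (I + C⁻¹ * ∑ g : W ↪ Fin n, (n : ℝ) ^ #{w | g w ∈ univ.map f}) := by
          simp only [mul_add, sum_add_distrib, mul_sum, mul_one, sum_const, card_univ,
            Fintype.card_embedding_eq, Fintype.card_fin, nsmul_eq_mul]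
          ring
      _ ≤ p ^ (2 * e) * (I + C⁻¹ * (K * I)) := by
          have := sum_pow_card_filter_mem_map_le (W := W) f hn
          gcongr
      _ = p ^ (2 * e) * I * (1 + K / C) := by ring
  have hsecond : expectation n p (fun Γ => embeddingCount Gp Γ ^ 2) ≤
      (1 + K / C) * expectation n p (embeddingCount Gp) ^ 2 := by
    rw [expectation_embeddingCount_sq, expectation_embeddingCount]
    calc ∑ f : W ↪ Fin n, ∑ g : W ↪ Fin n, p ^ #(Gp.map f ⊔ Gp.map g).edgeFinset
        ≤ ∑ _f : W ↪ Fin n, p ^ (2 * e) * I * (1 + K / C) := sum_le_sum fun f _ => hinner f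
      _ = (1 + K / C) * (I * p ^ e) ^ 2 := by
          simp only [sum_const, card_univ, Fintype.card_embedding_eq, Fintype.card_fin,
            nsmul_eq_mul]
          ring
  calc 1 - K / C ≤ probPred n p (embeddingCount Gp · ≠ 0) :=
        one_sub_le_probPred_ne_zero hp0.le hp1 (by positivity)
          (by rw [expectation_embeddingCount]; positivity) hsecond
    _ ≤ probPred n p (ContainsCopy Gp) :=
        probPred_mono hp0.le hp1 fun Γ => containsCopy_of_embeddingCount_ne_zero Gp

theorem tendsto_probPred_containsCopy_one (hE : Gp.edgeSet.Nonempty) (p : ℕ → ℝ)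
    (hp : ∀ n, 0 ≤ p n ∧ p n ≤ 1)
    (h : (fun n : ℕ => (n : ℝ) ^ (-(1 / maxDensity Gp))) =o[atTop] p) :
    Tendsto (fun n => probPred n (p n) (ContainsCopy Gp)) atTop (𝓝 1) := by
  set K : ℝ := (2 * (Fintype.card W + 1)) ^ Fintype.card W
  refine tendsto_order.2 ⟨fun a ha => ?_, fun b hb => Eventually.of_forall fun n =>
    (probPred_le_one (hp n).1 (hp n).2 _).trans_lt hb⟩
  set C := K / (1 - a) + 1
  have ha' : 0 < 1 - a := sub_pos.2 ha
  have hC : 1 ≤ C := le_add_of_nonneg_left (by positivity)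
  have hKC : K / C < 1 - a := by
    rw [div_lt_iff₀ (by linarith), mul_add, mul_div_cancel₀ _ ha'.ne']
    linarith
  filter_upwards [h.bound (inv_pos.2 (zero_lt_one.trans_le hC)),
    eventually_ge_atTop (2 * Fintype.card W)] with n hbound hn
  have hpC : C * (n : ℝ) ^ (-(1 / maxDensity Gp)) ≤ p n := by
    rw [Real.norm_of_nonneg (by positivity), Real.norm_of_nonneg (hp n).1] at hbound
    calc C * (n : ℝ) ^ (-(1 / maxDensity Gp)) ≤ C * (C⁻¹ * p n) := by gcongr
      _ = p n := by field_simp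
  linarith [one_sub_le_probPred_containsCopy Gp hE hC hn hpC (hp n).2]

end OneStatement

end RandomGraphSpectra

namespace RandomGraphSpectra

open Filter Topology Asymptotics

/-- The threshold for containing a copy of `G`: if `p = o(n^{-1/ρ^max(G)})` then a.a.s.
`G(n,p)` contains no copy of `G`; if `n^{-1/ρ^max(G)} = o(p)` then a.a.s. it contains one. -/
theorem threshold_subgraph_containment {W : Type*} [Fintype W] (Gp : SimpleGraph W)
    (hE : Gp.edgeSet.Nonempty) (p : ℕ → ℝ) (hp : ∀ n, 0 ≤ p n ∧ p n ≤ 1) :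
    ((p =o[atTop] fun n : ℕ => (n : ℝ) ^ (-(1 / maxDensity Gp))) →
      Tendsto (fun n : ℕ => probPred n (p n) (fun Γ => ContainsCopy Gp Γ))
        atTop (nhds 0)) ∧
    (((fun n : ℕ => (n : ℝ) ^ (-(1 / maxDensity Gp))) =o[atTop] p) →
      Tendsto (fun n : ℕ => probPred n (p n) (fun Γ => ContainsCopy Gp Γ))
        atTop (nhds 1)) :=
  ⟨tendsto_probPred_containsCopy_zero Gp hE p hp, tendsto_probPred_containsCopy_one Gp hE p hp⟩

end RandomGraphSpectra
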